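/- Let p and d be integers with 1 ≤ p and 2p ≤ d. Then for every β = (β₁,…,β_d) ∈ ℝ^d satisfying the symmetry-wall inequalities β₁ ≤ β₂ ≤ … ≤ β_d and the electric-wall inequality β₁ + … + β_p ≥ 0, one has Σ_{i=1}^d βᵢ ≥ 0 and Q(β) ≤ 0, i.e. Σ_{i=1}^d βᵢ² ≤ (Σ_{i=1}^d βᵢ)². (In other words, the wall cone of the gravity + single proper p-form system with no dilaton is contained in the closed future light cone of the DeWitt metric; hence the corresponding billiard has finite volume.) -/

import Mathlib

/-!
Split `β` at `p`: the first `p` entries are `≤ m := β_p` and have sum `U ≥ 0`, which forces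
`m ≥ 0`; the other `d - p ≥ p` entries are `≥ m` and have sum `V ≥ 0`. Reals `≤ m` with
nonnegative sum satisfy `Σ x² ≤ (Σ x)² + p (p - 1) m²` (the extreme case is one entry
`-(p - 1) m` and the rest equal to `m`), while reals `≥ m ≥ 0` satisfy
`Σ y² + n (n - 1) m² ≤ (Σ y)²`. Since `n ≥ p` and `2 U V ≥ 0`, the two bounds add up to
`Σ β² ≤ (U + V)²`.
-/

open Finset

section

variable {ι : Type*} {s : Finset ι} {x : ι → ℝ} {m : ℝ}

lemma sq_sum_sub_sum_sq (s : Finset ι) (x : ι → ℝ) :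
    (∑ i ∈ s, x i) ^ 2 - ∑ i ∈ s, x i ^ 2 = ∑ i ∈ s, x i * (∑ j ∈ s, x j - x i) := by
  simp only [mul_sub, sum_sub_distrib, ← sum_mul, sq]

lemma sum_sub_le_card_sub_one_mul (hx : ∀ j ∈ s, x j ≤ m) {i : ι} (hi : i ∈ s) :
    ∑ j ∈ s, x j - x i ≤ (#s - 1 : ℝ) * m := by
  classical
  rw [← add_sum_erase s x hi, add_sub_cancel_left, ← cast_card_erase_of_mem hi, ← nsmul_eq_mul]
  exact sum_le_card_nsmul _ _ _ fun j hj => hx j (mem_of_mem_erase hj)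

lemma card_sub_one_mul_le_sum_sub (hx : ∀ j ∈ s, m ≤ x j) {i : ι} (hi : i ∈ s) :
    (#s - 1 : ℝ) * m ≤ ∑ j ∈ s, x j - x i := by
  classical
  rw [← add_sum_erase s x hi, add_sub_cancel_left, ← cast_card_erase_of_mem hi, ← nsmul_eq_mul]
  exact card_nsmul_le_sum _ _ _ fun j hj => hx j (mem_of_mem_erase hj)

lemma sum_sq_le_sq_sum_add_of_forall_le (hm : 0 ≤ m) (hx : ∀ i ∈ s, x i ≤ m)
    (hsum : 0 ≤ ∑ i ∈ s, x i) :
    ∑ i ∈ s, x i ^ 2 ≤ (∑ i ∈ s, x i) ^ 2 + #s * (#s - 1) * m ^ 2 := by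
  rcases s.eq_empty_or_nonempty with rfl | hne
  · simp
  set U := ∑ i ∈ s, x i
  have hc : (1 : ℝ) ≤ #s := by exact_mod_cast hne.card_pos
  set c : ℝ := (#s : ℝ)
  -- every `x i` lies in `[a, m]` with `a = U - (c - 1) m`, and `(x i - a) (m - x i) ≥ 0`
  have hbox : ∀ i ∈ s, x i ^ 2 ≤ (U - (c - 2) * m) * x i - (U - (c - 1) * m) * m := by
    intro i hi
    nlinarith [hx i hi, sum_sub_le_card_sub_one_mul hx hi]
  calc ∑ i ∈ s, x i ^ 2 ≤ ∑ i ∈ s, ((U - (c - 2) * m) * x i - (U - (c - 1) * m) * m) :=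
        sum_le_sum hbox
    _ = U ^ 2 + c * (c - 1) * m ^ 2 - 2 * (c - 1) * m * U := by
        rw [sum_sub_distrib, ← mul_sum, sum_const, nsmul_eq_mul]; ring
    _ ≤ U ^ 2 + c * (c - 1) * m ^ 2 := by
        have : 0 ≤ (c - 1) * m * U := mul_nonneg (mul_nonneg (by linarith) hm) hsum
        linarith

lemma sum_sq_add_le_sq_sum_of_forall_ge (hm : 0 ≤ m) (hx : ∀ i ∈ s, m ≤ x i) :
    ∑ i ∈ s, x i ^ 2 + #s * (#s - 1) * m ^ 2 ≤ (∑ i ∈ s, x i) ^ 2 := by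
  have hpair : ∀ i ∈ s, (#s - 1 : ℝ) * m ^ 2 ≤ x i * (∑ j ∈ s, x j - x i) := by
    intro i hi
    have hc : (1 : ℝ) ≤ #s := by exact_mod_cast card_pos.2 ⟨i, hi⟩
    have hrest := card_sub_one_mul_le_sum_sub hx hi
    have hrest0 : 0 ≤ (#s - 1 : ℝ) * m := mul_nonneg (by linarith) hm
    calc (#s - 1 : ℝ) * m ^ 2 = ((#s - 1) * m) * m := by ring
      _ ≤ (∑ j ∈ s, x j - x i) * x i := mul_le_mul hrest (hx i hi) hm (hrest0.trans hrest)
      _ = x i * (∑ j ∈ s, x j - x i) := mul_comm _ _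
  have := sum_le_sum hpair
  rw [sum_const, nsmul_eq_mul, ← sq_sum_sub_sum_sq] at this
  linarith

lemma sum_sq_add_sum_sq_le_sq_add {t : Finset ι} (hst : #s ≤ #t) (hm : 0 ≤ m)
    (hs : ∀ i ∈ s, x i ≤ m) (ht : ∀ i ∈ t, m ≤ x i) (hsum : 0 ≤ ∑ i ∈ s, x i) :
    ∑ i ∈ s, x i ^ 2 + ∑ i ∈ t, x i ^ 2 ≤ (∑ i ∈ s, x i + ∑ i ∈ t, x i) ^ 2 := by
  have hS := sum_sq_le_sq_sum_add_of_forall_le hm hs hsum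
  have hT := sum_sq_add_le_sq_sum_of_forall_ge hm ht
  have hcard : (#s : ℝ) * (#s - 1) ≤ #t * (#t - 1) := by
    obtain ⟨k, hk⟩ := Nat.exists_eq_add_of_le hst
    rcases k.eq_zero_or_pos with rfl | hk0
    · simp [hk]
    have : (1 : ℝ) ≤ k := by exact_mod_cast hk0
    rw [hk, Nat.cast_add]
    nlinarith [(#s).cast_nonneg (α := ℝ)]
  have hV : 0 ≤ ∑ i ∈ t, x i := sum_nonneg fun i hi => hm.trans (ht i hi)
  nlinarith [mul_nonneg hsum hV, mul_le_mul_of_nonneg_right hcard (sq_nonneg m)]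

end

theorem wall_cone_in_light_cone (p d : ℕ) (hp : 1 ≤ p) (hpd : 2 * p ≤ d)
    (β : Fin d → ℝ) (hsym : Monotone β)
    (helec : 0 ≤ ∑ i ∈ Finset.univ.filter (fun i : Fin d => i.val < p), β i) :
    0 ≤ ∑ i, β i ∧ ∑ i, (β i) ^ 2 ≤ (∑ i, β i) ^ 2 := by
  set F := univ.filter fun i : Fin d => i.val < p
  set G := univ.filter fun i : Fin d => ¬ i.val < p
  set m := β ⟨p - 1, by omega⟩
  have hF : ∀ i ∈ F, β i ≤ m := fun i hi => hsym <| Fin.le_def.2 <| by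
    simp only [F, mem_filter] at hi; simp only; omega
  have hG : ∀ i ∈ G, m ≤ β i := fun i hi => hsym <| Fin.le_def.2 <| by
    simp only [G, mem_filter] at hi; simp only; omega
  have hFcard : #F = p := by simp [F, Fin.card_filter_val_lt]; omega
  have hFG : #F ≤ #G := by
    have : #F + #G = d := (card_filter_add_card_filter_not _).trans (by simp)
    omega
  have hm : 0 ≤ m := by
    have := helec.trans (sum_le_card_nsmul F β m hF)
    rw [hFcard, nsmul_eq_mul] at this
    exact (mul_nonneg_iff_of_pos_left (by exact_mod_cast hp)).1 this
  have hsplit : ∀ f : Fin d → ℝ, ∑ i, f i = ∑ i ∈ F, f i + ∑ i ∈ G, f i := fun f =>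
    (sum_filter_add_sum_filter_not univ _ f).symm
  rw [hsplit β, hsplit (β · ^ 2)]
  exact ⟨add_nonneg helec (sum_nonneg fun i hi => hm.trans (hG i hi)),
    sum_sq_add_sum_sq_le_sq_add hFG hm hF hG helec⟩
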